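/- Let P be the solution of the synaptic CME with initial condition P(N0,0,0)=1 and P(n,o,0)=0 for all other states. Then for every integer 0 ≤ n0 ≤ N0, the upper tail of the marginal P_N is nonincreasing in time: for all 0 ≤ t ≤ t' one has ∑_{n=n0}^{N0} P_N(n, t') ≤ ∑_{n=n0}^{N0} P_N(n, t). -/

import Mathlib

open Finset

/-- Right-hand side of the synaptic chemical master equation (CME) for state `(n,o)`
at time `t`.  Terms referring to out-of-range indices are set to zero. -/
noncomputable def cmeRHS (N0 C : ℕ) (κd κe : ℝ) (κa : ℝ → ℝ)
    (P : ℕ → ℕ → ℝ → ℝ) (n o : ℕ) (t : ℝ) : ℝ :=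
  -(κd * (o : ℝ) + κe * ((n : ℝ) - (o : ℝ)) + κa t * ((n : ℝ) - (o : ℝ)) * ((C : ℝ) - (o : ℝ)))
      * P n o t
  + (if o + 1 ≤ C then κd * ((o : ℝ) + 1) * P n (o + 1) t else 0)
  + (if n + 1 ≤ N0 then κe * ((n : ℝ) + 1 - (o : ℝ)) * P (n + 1) o t else 0)
  + (if 1 ≤ o then κa t * ((n : ℝ) - (o : ℝ) + 1) * ((C : ℝ) - (o : ℝ) + 1) * P n (o - 1) t
     else 0)

/-- `P` solves the synaptic CME on `[0,∞)`. -/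
def IsCMESolution (N0 C : ℕ) (κd κe : ℝ) (κa : ℝ → ℝ) (P : ℕ → ℕ → ℝ → ℝ) : Prop :=
  ∀ n, n ≤ N0 → ∀ o, o ≤ C → ∀ t : ℝ, 0 ≤ t →
    HasDerivAt (fun s => P n o s) (cmeRHS N0 C κd κe κa P n o t) t

/-- Marginal distribution of the total number of neurotransmitters:
`P_N(n,t) = ∑_{o=0}^{C} P(n,o,t)`. -/
noncomputable def margN (C : ℕ) (P : ℕ → ℕ → ℝ → ℝ) (n : ℕ) (t : ℝ) : ℝ :=
  ∑ o ∈ Finset.range (C + 1), P n o t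

/-- Marginal distribution of the number of occupied receptors:
`P_O(o,t) = ∑_{n=0}^{N0} P(n,o,t)`. -/
noncomputable def margO (N0 : ℕ) (P : ℕ → ℕ → ℝ → ℝ) (o : ℕ) (t : ℝ) : ℝ :=
  ∑ n ∈ Finset.range (N0 + 1), P n o t

/-- Binomial probability mass function `P_B(k; m, p)`. -/
noncomputable def binPMF (m : ℕ) (p : ℝ) (k : ℕ) : ℝ :=
  (m.choose k : ℝ) * p ^ k * (1 - p) ^ (m - k)

/-- Right-hand side of the CME truncated to the state set `S`: the entry for a state
`(n,o) ∈ S` keeps the full diagonal term but only receives inflow from states in `S`. -/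
noncomputable def truncRHS (N0 C : ℕ) (κd κe : ℝ) (κa : ℝ → ℝ)
    (S : Finset (ℕ × ℕ)) (Q : ℕ → ℕ → ℝ → ℝ) (n o : ℕ) (t : ℝ) : ℝ :=
  -(κd * (o : ℝ) + κe * ((n : ℝ) - (o : ℝ)) + κa t * ((n : ℝ) - (o : ℝ)) * ((C : ℝ) - (o : ℝ)))
      * Q n o t
  + (if o + 1 ≤ C ∧ (n, o + 1) ∈ S then κd * ((o : ℝ) + 1) * Q n (o + 1) t else 0)
  + (if n + 1 ≤ N0 ∧ (n + 1, o) ∈ S then κe * ((n : ℝ) + 1 - (o : ℝ)) * Q (n + 1) o t else 0)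
  + (if 1 ≤ o ∧ (n, o - 1) ∈ S then
      κa t * ((n : ℝ) - (o : ℝ) + 1) * ((C : ℝ) - (o : ℝ) + 1) * Q n (o - 1) t
     else 0)

/-- `Q` is the truncated solution on the state set `S` for `t ≥ tk`, with initial
condition `Q(tk) = P(tk)|_S`. -/
def IsTruncatedSolution (N0 C : ℕ) (κd κe : ℝ) (κa : ℝ → ℝ)
    (S : Finset (ℕ × ℕ)) (tk : ℝ) (P Q : ℕ → ℕ → ℝ → ℝ) : Prop :=
  (∀ p ∈ S, Q p.1 p.2 tk = P p.1 p.2 tk) ∧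
  (∀ p ∈ S, ∀ t : ℝ, tk ≤ t →
    HasDerivAt (fun s => Q p.1 p.2 s) (truncRHS N0 C κd κe κa S Q p.1 p.2 t) t)

/-!
The tail `∑_{n ≥ n0} P_N(n, t)` changes only through the escape flux
`∑_o κe (n0 - o) P(n0, o, t)` out of row `n0`: binding and unbinding keep `n` fixed, and the escape
terms telescope in `n`. This flux is nonnegative because the states with `o > n` form a closed
subsystem started at zero, so they stay empty, while on the states with `o ≤ n` all inflow rates
are nonnegative, so the solution stays nonnegative there. Both invariance facts come from a
Gronwall estimate on `∑ |P|`, resp. `∑ P⁻`, whose right Dini derivatives are bounded linearly.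
-/

open Filter Topology

/-- `c` bounds the upper right Dini derivative `limsup_{z → t⁺} slope f t z`. -/
def UpperRightDiniLE (f : ℝ → ℝ) (t c : ℝ) : Prop :=
  ∀ r, c < r → ∀ᶠ z in 𝓝[>] t, slope f t z < r

namespace UpperRightDiniLE

variable {f g : ℝ → ℝ} {t c c' : ℝ}

lemma mono (h : UpperRightDiniLE f t c) (hc : c ≤ c') : UpperRightDiniLE f t c' :=
  fun r hr => h r (hc.trans_lt hr)

lemma const (a : ℝ) : UpperRightDiniLE (fun _ => a) t 0 := fun r hr =>
  Eventually.of_forall fun z => by simpa [slope_def_field] using hr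

lemma add (hf : UpperRightDiniLE f t c) (hg : UpperRightDiniLE g t c') :
    UpperRightDiniLE (fun z => f z + g z) t (c + c') := by
  intro r hr
  filter_upwards [hf (c + (r - c - c') / 2) (by linarith),
    hg (c' + (r - c - c') / 2) (by linarith)] with z hfz hgz
  have : slope (fun z => f z + g z) t z = slope f t z + slope g t z := by
    simp only [slope_def_field]; ring
  linarith

lemma sum {ι : Type*} (S : Finset ι) {f : ι → ℝ → ℝ} {c : ι → ℝ}
    (h : ∀ i ∈ S, UpperRightDiniLE (f i) t (c i)) :
    UpperRightDiniLE (fun z => ∑ i ∈ S, f i z) t (∑ i ∈ S, c i) := by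
  classical
  induction S using Finset.induction_on with
  | empty => simpa using const (t := t) 0
  | insert a S ha ih =>
    simp only [Finset.sum_insert ha]
    exact (h a (mem_insert_self a S)).add (ih fun i hi => h i (mem_insert_of_mem hi))

end UpperRightDiniLE

lemma HasDerivAt.upperRightDiniLE_abs {p : ℝ → ℝ} {d t : ℝ} (hp : HasDerivAt p d t) :
    UpperRightDiniLE (fun z => |p z|) t |d| := by
  intro r hr
  have hslope : Tendsto (fun z => |slope p t z|) (𝓝[>] t) (𝓝 |d|) :=
    ((hasDerivAt_iff_tendsto_slope.mp hp).mono_left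
      (nhdsWithin_mono _ fun _ hz => ne_of_gt hz)).abs
  filter_upwards [hslope.eventually (eventually_lt_nhds hr)] with z hz
  calc slope (fun z => |p z|) t z ≤ |slope (fun z => |p z|) t z| := le_abs_self _
    _ ≤ |slope p t z| := by
        simp only [slope_def_field, abs_div]
        exact div_le_div_of_nonneg_right (abs_abs_sub_abs_le_abs_sub _ _) (abs_nonneg _)
    _ < r := hz

lemma HasDerivAt.upperRightDiniLE_negPart {p : ℝ → ℝ} {d t c : ℝ} (hp : HasDerivAt p d t)
    (hc0 : 0 ≤ c) (hc : p t ≤ 0 → -d ≤ c) :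
    UpperRightDiniLE (fun z => (p z)⁻) t c := by
  intro r hr
  rcases lt_or_ge 0 (p t) with hpos | hnonpos
  · filter_upwards [(hp.continuousAt.eventually (eventually_gt_nhds hpos)).filter_mono
      nhdsWithin_le_nhds] with z hz
    rw [slope_def_field, negPart_eq_zero.mpr hz.le, negPart_eq_zero.mpr hpos.le, sub_self,
      zero_div]
    linarith
  · have hslope : Tendsto (slope p t) (𝓝[>] t) (𝓝 d) :=
      (hasDerivAt_iff_tendsto_slope.mp hp).mono_left
        (nhdsWithin_mono _ fun _ hz => ne_of_gt hz)
    filter_upwards [hslope.eventually (eventually_gt_nhds (show d > -r by linarith [hc hnonpos])),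
      self_mem_nhdsWithin] with z hz (htz : t < z)
    have hzt : 0 < z - t := sub_pos.mpr htz
    rw [slope_def_field, div_lt_iff₀ hzt, negPart_eq_neg.mpr hnonpos]
    rw [slope_def_field, lt_div_iff₀ hzt] at hz
    rcases le_total (p z) 0 with h | h
    · rw [negPart_eq_neg.mpr h]; linarith
    · rw [negPart_eq_zero.mpr h]; nlinarith

lemma le_zero_of_upperRightDiniLE_mul {f : ℝ → ℝ} {a b K : ℝ} (hf : ContinuousOn f (Set.Icc a b))
    (ha : f a ≤ 0) (hdini : ∀ t ∈ Set.Ico a b, UpperRightDiniLE f t (K * f t)) :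
    ∀ t ∈ Set.Icc a b, f t ≤ 0 := by
  intro t ht
  simpa [gronwallBound_ε0_δ0] using le_gronwallBound_of_liminf_deriv_right_le hf
    (fun s hs r hr => (hdini s hs r hr).frequently) ha (fun s _ => (add_zero _).ge) t ht

section FiniteSystem

variable {ι : Type*} {S : Finset ι} {a b K : ℝ}

lemma eq_zero_of_upperRightDiniLE_mul_sum {g : ι → ℝ → ℝ}
    (hg0 : ∀ i ∈ S, ∀ t, 0 ≤ g i t) (hg : ∀ i ∈ S, ContinuousOn (g i) (Set.Icc a b))
    (ha : ∀ i ∈ S, g i a = 0)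
    (hdini : ∀ i ∈ S, ∀ t ∈ Set.Ico a b, UpperRightDiniLE (g i) t (K * ∑ j ∈ S, g j t)) :
    ∀ i ∈ S, ∀ t ∈ Set.Icc a b, g i t = 0 := by
  have hsum := le_zero_of_upperRightDiniLE_mul (K := #S * K) (continuousOn_finsetSum S hg)
    (sum_nonpos fun i hi => (ha i hi).le) fun t ht => by
      simpa [sum_const, mul_assoc] using UpperRightDiniLE.sum S fun i hi => hdini i hi t ht
  intro i hi t ht
  exact (sum_eq_zero_iff_of_nonneg fun j hj => hg0 j hj t).mp
    ((hsum t ht).antisymm (sum_nonneg fun j hj => hg0 j hj t)) i hi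

variable {x x' : ι → ℝ → ℝ}

lemma eq_zero_of_abs_deriv_le_mul_sum
    (hx : ∀ i ∈ S, ∀ t ∈ Set.Icc a b, HasDerivAt (x i) (x' i t) t)
    (hbound : ∀ i ∈ S, ∀ t ∈ Set.Ico a b, |x' i t| ≤ K * ∑ j ∈ S, |x j t|)
    (ha : ∀ i ∈ S, x i a = 0) :
    ∀ i ∈ S, ∀ t ∈ Set.Icc a b, x i t = 0 := by
  have hcont (i) (hi : i ∈ S) : ContinuousOn (x i) (Set.Icc a b) :=
    fun t ht => (hx i hi t ht).continuousAt.continuousWithinAt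
  have := eq_zero_of_upperRightDiniLE_mul_sum (g := fun i t => |x i t|)
    (fun i _ t => abs_nonneg _) (fun i hi => continuous_abs.comp_continuousOn (hcont i hi))
    (fun i hi => by simp [ha i hi]) fun i hi t ht =>
      (hx i hi t (Set.Ico_subset_Icc_self ht)).upperRightDiniLE_abs.mono (hbound i hi t ht)
  exact fun i hi t ht => abs_eq_zero.mp (this i hi t ht)

lemma nonneg_of_neg_deriv_le_mul_sum (hK : 0 ≤ K)
    (hx : ∀ i ∈ S, ∀ t ∈ Set.Icc a b, HasDerivAt (x i) (x' i t) t)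
    (hbound : ∀ i ∈ S, ∀ t ∈ Set.Ico a b, x i t ≤ 0 → -x' i t ≤ K * ∑ j ∈ S, (x j t)⁻)
    (ha : ∀ i ∈ S, 0 ≤ x i a) :
    ∀ i ∈ S, ∀ t ∈ Set.Icc a b, 0 ≤ x i t := by
  have hcont (i) (hi : i ∈ S) : ContinuousOn (x i) (Set.Icc a b) :=
    fun t ht => (hx i hi t ht).continuousAt.continuousWithinAt
  have := eq_zero_of_upperRightDiniLE_mul_sum (g := fun i t => (x i t)⁻)
    (fun i _ t => negPart_nonneg _) (fun i hi => continuous_negPart.comp_continuousOn (hcont i hi))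
    (fun i hi => negPart_eq_zero.mpr (ha i hi)) fun i hi t ht =>
      (hx i hi t (Set.Ico_subset_Icc_self ht)).upperRightDiniLE_negPart
        (mul_nonneg hK (sum_nonneg fun j _ => negPart_nonneg _)) (hbound i hi t ht)
  exact fun i hi t ht => negPart_eq_zero.mp (this i hi t ht)

end FiniteSystem

lemma abs_mul_le_mul_of_ne_zero {c y B F : ℝ} (hc : |c| ≤ B) (hF : 0 ≤ F)
    (hy : c ≠ 0 → |y| ≤ F) : |c * y| ≤ B * F := by
  rcases eq_or_ne c 0 with rfl | h
  · simpa using mul_nonneg ((abs_nonneg _).trans hc) hF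
  · rw [abs_mul]; exact mul_le_mul hc (hy h) (abs_nonneg _) ((abs_nonneg _).trans hc)

lemma neg_mul_le_mul_negPart {c y B F : ℝ} (hc0 : 0 ≤ c) (hc : c ≤ B) (hy : y⁻ ≤ F) :
    -(c * y) ≤ B * F :=
  calc -(c * y) = c * -y := by ring
    _ ≤ c * y⁻ := mul_le_mul_of_nonneg_left (neg_le_negPart y) hc0
    _ ≤ B * F := mul_le_mul hc hy (negPart_nonneg y) (hc0.trans hc)

def cmeRateBound (N0 C : ℕ) (κd κe Ka : ℝ) : ℝ := (κd + κe + Ka) * ((N0 : ℝ) + C + 1) ^ 2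

lemma cmeRateBound_nonneg {N0 C : ℕ} {κd κe Ka : ℝ} (hκd : 0 ≤ κd) (hκe : 0 ≤ κe) (hKa : 0 ≤ Ka) :
    0 ≤ cmeRateBound N0 C κd κe Ka := by
  unfold cmeRateBound; positivity

section RateBounds

variable {N0 C n o : ℕ} {κd κe κ Ka F s : ℝ} {κa : ℝ → ℝ} {P : ℕ → ℕ → ℝ → ℝ}

lemma abs_cme_rates_le (hn : n ≤ N0) (ho : o ≤ C) (hκd : 0 ≤ κd) (hκe : 0 ≤ κe) (hκ : 0 ≤ κ)
    (hκKa : κ ≤ Ka) :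
    |κd * (o : ℝ) + κe * ((n : ℝ) - o) + κ * ((n : ℝ) - o) * ((C : ℝ) - o)|
        ≤ cmeRateBound N0 C κd κe Ka ∧
      |κd * ((o : ℝ) + 1)| ≤ cmeRateBound N0 C κd κe Ka ∧
      |κe * ((n : ℝ) + 1 - o)| ≤ cmeRateBound N0 C κd κe Ka ∧
      |κ * ((n : ℝ) - o + 1) * ((C : ℝ) - o + 1)| ≤ cmeRateBound N0 C κd κe Ka := by
  have hn' : (n : ℝ) ≤ N0 := by exact_mod_cast hn
  have ho' : (o : ℝ) ≤ C := by exact_mod_cast ho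
  have hn0 : (0 : ℝ) ≤ n := n.cast_nonneg
  have ho0 : (0 : ℝ) ≤ o := o.cast_nonneg
  set M : ℝ := (N0 : ℝ) + C + 1
  have hM : 1 ≤ M := le_add_of_nonneg_left (by positivity)
  have habs {u : ℝ} (h₁ : -M ≤ u) (h₂ : u ≤ M) : |u| ≤ M := abs_le.mpr ⟨h₁, h₂⟩
  have hcM {c u : ℝ} (hc : 0 ≤ c) (hu : |u| ≤ M) : |c * u| ≤ c * M ^ 2 := by
    rw [abs_mul, abs_of_nonneg hc]
    exact mul_le_mul_of_nonneg_left (hu.trans (by nlinarith)) hc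
  have hκM {u v : ℝ} (hu : |u| ≤ M) (hv : |v| ≤ M) : |κ * u * v| ≤ Ka * M ^ 2 := by
    rw [abs_mul, abs_mul, abs_of_nonneg hκ, mul_assoc, sq]
    exact mul_le_mul hκKa (mul_le_mul hu hv (abs_nonneg _) (by linarith)) (by positivity)
      (hκ.trans hκKa)
  have hB : cmeRateBound N0 C κd κe Ka = κd * M ^ 2 + κe * M ^ 2 + Ka * M ^ 2 := by
    unfold cmeRateBound; ring
  have hdM : 0 ≤ κd * M ^ 2 := by positivity
  have heM : 0 ≤ κe * M ^ 2 := by positivity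
  have hKaM : 0 ≤ Ka * M ^ 2 := mul_nonneg (hκ.trans hκKa) (sq_nonneg M)
  rw [hB]
  refine ⟨(abs_add_three _ _ _).trans (add_le_add_three (hcM hκd (habs (by linarith) (by linarith)))
    (hcM hκe (habs (by linarith) (by linarith))) (hκM (habs (by linarith) (by linarith))
    (habs (by linarith) (by linarith)))), ?_, ?_, ?_⟩
  · linarith [hcM hκd (habs (u := (o : ℝ) + 1) (by linarith) (by linarith))]
  · linarith [hcM hκe (habs (u := (n : ℝ) + 1 - o) (by linarith) (by linarith))]
  · linarith [hκM (habs (u := (n : ℝ) - o + 1) (by linarith) (by linarith))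
      (habs (u := (C : ℝ) - o + 1) (by linarith) (by linarith))]

/-- The rates into `(n, n + 1)` from the states `(n + 1, n + 1)` and `(n, n)` vanish, so a state
with `o > n` only receives inflow from states with `o > n`. -/
lemma abs_cmeRHS_le_of_lt (hn : n ≤ N0) (ho : o ≤ C) (hno : n < o) (hκd : 0 ≤ κd)
    (hκe : 0 ≤ κe) (hk0 : 0 ≤ κa s) (hk : κa s ≤ Ka)
    (hF : ∀ m k, m ≤ N0 → k ≤ C → m < k → |P m k s| ≤ F) :
    |cmeRHS N0 C κd κe κa P n o s| ≤ 4 * cmeRateBound N0 C κd κe Ka * F := by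
  obtain ⟨c0, c1, c2, c3⟩ := abs_cme_rates_le hn ho hκd hκe hk0 hk
  have hF0 : 0 ≤ F := (abs_nonneg _).trans (hF n o hn ho hno)
  have e0 := abs_mul_le_mul_of_ne_zero ((abs_neg _).trans_le c0) hF0
    fun _ => hF n o hn ho hno
  have e1 : |if o + 1 ≤ C then κd * ((o : ℝ) + 1) * P n (o + 1) s else 0|
      ≤ cmeRateBound N0 C κd κe Ka * F := by
    split_ifs with h
    · exact abs_mul_le_mul_of_ne_zero c1 hF0 fun _ => hF n (o + 1) hn h (by omega)
    · simpa using mul_nonneg ((abs_nonneg _).trans c1) hF0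
  have e2 : |if n + 1 ≤ N0 then κe * ((n : ℝ) + 1 - o) * P (n + 1) o s else 0|
      ≤ cmeRateBound N0 C κd κe Ka * F := by
    split_ifs with h
    · refine abs_mul_le_mul_of_ne_zero c2 hF0 fun hc => hF (n + 1) o h ho ?_
      by_contra! hle
      obtain rfl : o = n + 1 := by omega
      simp at hc
    · simpa using mul_nonneg ((abs_nonneg _).trans c1) hF0
  have e3 : |if 1 ≤ o then κa s * ((n : ℝ) - o + 1) * ((C : ℝ) - o + 1) * P n (o - 1) s else 0|
      ≤ cmeRateBound N0 C κd κe Ka * F := by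
    split_ifs with h
    · refine abs_mul_le_mul_of_ne_zero c3 hF0 fun hc => hF n (o - 1) hn (by omega) ?_
      by_contra! hle
      obtain rfl : o = n + 1 := by omega
      simp at hc
    · simpa using mul_nonneg ((abs_nonneg _).trans c1) hF0
  unfold cmeRHS
  rw [abs_le] at e0 e1 e2 e3 ⊢
  constructor <;> linarith [e0.1, e0.2, e1.1, e1.2, e2.1, e2.2, e3.1, e3.2]

lemma neg_cmeRHS_le_of_le (hn : n ≤ N0) (ho : o ≤ C) (hon : o ≤ n) (hκd : 0 ≤ κd)
    (hκe : 0 ≤ κe) (hk0 : 0 ≤ κa s) (hk : κa s ≤ Ka) (hP : P n o s ≤ 0)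
    (hF : ∀ m k, m ≤ N0 → k ≤ C → (P m k s)⁻ ≤ F) :
    -cmeRHS N0 C κd κe κa P n o s ≤ 3 * cmeRateBound N0 C κd κe Ka * F := by
  obtain ⟨-, c1, c2, c3⟩ := abs_cme_rates_le hn ho hκd hκe hk0 hk
  have hno : (o : ℝ) ≤ n := by exact_mod_cast hon
  have hoC : (o : ℝ) ≤ C := by exact_mod_cast ho
  have hBF : 0 ≤ cmeRateBound N0 C κd κe Ka * F :=
    mul_nonneg ((abs_nonneg _).trans c1) ((negPart_nonneg _).trans (hF n o hn ho))
  have e0 : 0 ≤ (κd * (o : ℝ) + κe * ((n : ℝ) - o) + κa s * ((n : ℝ) - o) * ((C : ℝ) - o)) :=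
    by have := sub_nonneg.mpr hno; have := sub_nonneg.mpr hoC; positivity
  have e1 : -(if o + 1 ≤ C then κd * ((o : ℝ) + 1) * P n (o + 1) s else 0)
      ≤ cmeRateBound N0 C κd κe Ka * F := by
    split_ifs with h
    · exact neg_mul_le_mul_negPart (by positivity) ((le_abs_self _).trans c1) (hF n _ hn h)
    · simpa using hBF
  have e2 : -(if n + 1 ≤ N0 then κe * ((n : ℝ) + 1 - o) * P (n + 1) o s else 0)
      ≤ cmeRateBound N0 C κd κe Ka * F := by
    split_ifs with h
    · exact neg_mul_le_mul_negPart (mul_nonneg hκe (by linarith)) ((le_abs_self _).trans c2)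
        (hF _ o h ho)
    · simpa using hBF
  have e3 : -(if 1 ≤ o then κa s * ((n : ℝ) - o + 1) * ((C : ℝ) - o + 1) * P n (o - 1) s else 0)
      ≤ cmeRateBound N0 C κd κe Ka * F := by
    split_ifs with h
    · exact neg_mul_le_mul_negPart (mul_nonneg (mul_nonneg hk0 (by linarith)) (by linarith))
        ((le_abs_self _).trans c3) (hF n _ hn (by omega))
    · simpa using hBF
  unfold cmeRHS
  linarith [mul_nonpos_of_nonneg_of_nonpos e0 hP]

end RateBounds

lemma sum_Icc_ite_succ_sub (f : ℕ → ℝ) {a b : ℕ} (hab : a ≤ b) :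
    ∑ n ∈ Icc a b, ((if n + 1 ≤ b then f (n + 1) else 0) - f n) = -f a := by
  let g : ℕ → ℝ := fun n => if n ≤ b then f n else 0
  have hg : ∀ n ∈ Icc a b, (if n + 1 ≤ b then f (n + 1) else 0) - f n = g (n + 1) - g n :=
    fun n hn => by simp [g, (mem_Icc.mp hn).2]
  rw [sum_congr rfl hg, sum_Icc_sub hab]
  simp [g, hab]

lemma sum_range_ite_pred_sub (f : ℕ → ℝ) (b : ℕ) :
    ∑ n ∈ range (b + 1), ((if 1 ≤ n then f (n - 1) else 0) - f n) = -f b := by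
  induction b with
  | zero => simp
  | succ b ih => rw [sum_range_succ, ih, if_pos (by omega), Nat.add_sub_cancel]; ring

section Flux

variable {N0 C : ℕ} {κd κe : ℝ} {κa : ℝ → ℝ} {P : ℕ → ℕ → ℝ → ℝ}

lemma cmeRHS_eq_flux_sub (n o : ℕ) (t : ℝ) : cmeRHS N0 C κd κe κa P n o t =
    ((if o + 1 ≤ C then κd * ((o + 1 : ℕ) : ℝ) * P n (o + 1) t else 0) - κd * o * P n o t)
    + ((if 1 ≤ o then κa t * ((n : ℝ) - (o - 1 : ℕ)) * ((C : ℝ) - (o - 1 : ℕ)) * P n (o - 1) t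
        else 0) - κa t * ((n : ℝ) - o) * ((C : ℝ) - o) * P n o t)
    + ((if n + 1 ≤ N0 then κe * (((n + 1 : ℕ) : ℝ) - o) * P (n + 1) o t else 0)
        - κe * ((n : ℝ) - o) * P n o t) := by
  unfold cmeRHS
  rcases o with _ | o
  · simp only [Nat.le_zero, one_ne_zero, if_false]
    split_ifs <;> push_cast <;> ring
  · simp only [Nat.le_add_left, if_true, Nat.add_sub_cancel]
    split_ifs <;> push_cast <;> ring

lemma sum_cmeRHS_upper_tail {n0 : ℕ} (hn0 : n0 ≤ N0) (t : ℝ) :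
    ∑ n ∈ Icc n0 N0, ∑ o ∈ range (C + 1), cmeRHS N0 C κd κe κa P n o t
      = -∑ o ∈ range (C + 1), κe * ((n0 : ℝ) - o) * P n0 o t := by
  have hunbind : ∀ n : ℕ, ∑ o ∈ range (C + 1), ((if o + 1 ≤ C
      then κd * ((o + 1 : ℕ) : ℝ) * P n (o + 1) t else 0) - κd * o * P n o t) = 0 := fun n => by
    rw [Nat.range_succ_eq_Icc_zero, sum_Icc_ite_succ_sub (fun o => κd * o * P n o t) C.zero_le]
    simp
  have hbind : ∀ n : ℕ, ∑ o ∈ range (C + 1), ((if 1 ≤ o then κa t * ((n : ℝ) - (o - 1 : ℕ))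
      * ((C : ℝ) - (o - 1 : ℕ)) * P n (o - 1) t else 0)
      - κa t * ((n : ℝ) - o) * ((C : ℝ) - o) * P n o t) = 0 := fun n => by
    rw [sum_range_ite_pred_sub (fun o => κa t * ((n : ℝ) - o) * ((C : ℝ) - o) * P n o t)]
    simp
  calc _ = ∑ n ∈ Icc n0 N0, ∑ o ∈ range (C + 1),
        ((if n + 1 ≤ N0 then κe * (((n + 1 : ℕ) : ℝ) - o) * P (n + 1) o t else 0)
          - κe * ((n : ℝ) - o) * P n o t) := sum_congr rfl fun n _ => by
        simp only [cmeRHS_eq_flux_sub, sum_add_distrib, hunbind, hbind, zero_add]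
    _ = _ := by
        rw [sum_comm, ← sum_neg_distrib]
        exact sum_congr rfl fun o _ =>
          sum_Icc_ite_succ_sub (fun n => κe * ((n : ℝ) - o) * P n o t) hn0

end Flux

namespace IsCMESolution

variable {N0 C : ℕ} {κd κe : ℝ} {κa : ℝ → ℝ} {P : ℕ → ℕ → ℝ → ℝ}

theorem eq_zero_of_lt (hP : IsCMESolution N0 C κd κe κa P) (hκd : 0 ≤ κd) (hκe : 0 ≤ κe)
    (hκa_cont : Continuous κa) (hκa : ∀ t, 0 ≤ κa t)
    (hinit0 : ∀ n o : ℕ, ¬(n = N0 ∧ o = 0) → P n o 0 = 0)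
    {n o : ℕ} (hn : n ≤ N0) (ho : o ≤ C) (hno : n < o) {t : ℝ} (ht : 0 ≤ t) :
    P n o t = 0 := by
  obtain ⟨Ka, hKa⟩ := (isCompact_Icc (a := 0) (b := t)).bddAbove_image hκa_cont.continuousOn
  let S := (range (N0 + 1) ×ˢ range (C + 1)).filter fun p => p.1 < p.2
  have hS : ∀ {p : ℕ × ℕ}, p ∈ S ↔ p.1 ≤ N0 ∧ p.2 ≤ C ∧ p.1 < p.2 := by
    simp [S, and_assoc]
  refine eq_zero_of_abs_deriv_le_mul_sum (x := fun p s => P p.1 p.2 s)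
    (K := 4 * cmeRateBound N0 C κd κe Ka)
    (fun p hp s hs => hP _ (hS.1 hp).1 _ (hS.1 hp).2.1 s hs.1) (fun p hp s hs => ?_)
    (fun p hp => hinit0 _ _ (by have := (hS.1 hp).2.2; omega))
    (n, o) (hS.2 ⟨hn, ho, hno⟩) t ⟨ht, le_rfl⟩
  obtain ⟨hm, hk, hmk⟩ := hS.1 hp
  exact abs_cmeRHS_le_of_lt hm hk hmk hκd hκe (hκa s)
    (hKa (Set.mem_image_of_mem κa (Set.Ico_subset_Icc_self hs))) fun m k hm hk hmk =>
      single_le_sum (f := fun p : ℕ × ℕ => |P p.1 p.2 s|) (fun _ _ => abs_nonneg _)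
        ((hS (p := (m, k))).2 ⟨hm, hk, hmk⟩)

theorem nonneg (hP : IsCMESolution N0 C κd κe κa P) (hκd : 0 ≤ κd) (hκe : 0 ≤ κe)
    (hκa_cont : Continuous κa) (hκa : ∀ t, 0 ≤ κa t) (hinit1 : P N0 0 0 = 1)
    (hinit0 : ∀ n o : ℕ, ¬(n = N0 ∧ o = 0) → P n o 0 = 0)
    {n o : ℕ} (hn : n ≤ N0) (ho : o ≤ C) {t : ℝ} (ht : 0 ≤ t) :
    0 ≤ P n o t := by
  have hvanish {m k : ℕ} (hm : m ≤ N0) (hk : k ≤ C) (hmk : m < k) {s : ℝ} (hs : 0 ≤ s) :=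
    hP.eq_zero_of_lt hκd hκe hκa_cont hκa hinit0 hm hk hmk hs
  rcases lt_or_ge n o with hno | hon
  · exact (hvanish hn ho hno ht).ge
  obtain ⟨Ka, hKa⟩ := (isCompact_Icc (a := 0) (b := t)).bddAbove_image hκa_cont.continuousOn
  have hB : 0 ≤ cmeRateBound N0 C κd κe Ka :=
    cmeRateBound_nonneg hκd hκe ((hκa 0).trans (hKa (Set.mem_image_of_mem κa ⟨le_rfl, ht⟩)))
  let S := (range (N0 + 1) ×ˢ range (C + 1)).filter fun p => p.2 ≤ p.1
  have hS : ∀ {p : ℕ × ℕ}, p ∈ S ↔ p.1 ≤ N0 ∧ p.2 ≤ C ∧ p.2 ≤ p.1 := by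
    simp [S, and_assoc]
  refine nonneg_of_neg_deriv_le_mul_sum (x := fun p s => P p.1 p.2 s)
    (K := 3 * cmeRateBound N0 C κd κe Ka) (by positivity)
    (fun p hp s hs => hP _ (hS.1 hp).1 _ (hS.1 hp).2.1 s hs.1) (fun p hp s hs hneg => ?_)
    (fun p _ => ?_) (n, o) (hS.2 ⟨hn, ho, hon⟩) t ⟨ht, le_rfl⟩
  · obtain ⟨hm, hk, hkm⟩ := hS.1 hp
    have hF0 : 0 ≤ ∑ q ∈ S, (P q.1 q.2 s)⁻ := sum_nonneg fun _ _ => negPart_nonneg _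
    refine neg_cmeRHS_le_of_le hm hk hkm hκd hκe (hκa s)
      (hKa (Set.mem_image_of_mem κa (Set.Ico_subset_Icc_self hs))) hneg fun m k hm hk => ?_
    rcases lt_or_ge m k with hmk | hkm
    · simpa [hvanish hm hk hmk hs.1] using hF0
    · exact single_le_sum (f := fun q : ℕ × ℕ => (P q.1 q.2 s)⁻) (fun _ _ => negPart_nonneg _)
        ((hS (p := (m, k))).2 ⟨hm, hk, hkm⟩)
  · by_cases hp : p.1 = N0 ∧ p.2 = 0
    · simp [hp.1, hp.2, hinit1]
    · simp [hinit0 _ _ hp]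

theorem hasDerivAt_upper_tail (hP : IsCMESolution N0 C κd κe κa P) {n0 : ℕ} (hn0 : n0 ≤ N0)
    {t : ℝ} (ht : 0 ≤ t) :
    HasDerivAt (fun s => ∑ n ∈ Icc n0 N0, margN C P n s)
      (-∑ o ∈ range (C + 1), κe * ((n0 : ℝ) - o) * P n0 o t) t := by
  rw [← sum_cmeRHS_upper_tail hn0]
  exact HasDerivAt.fun_sum fun n hn => HasDerivAt.fun_sum fun o ho =>
    hP n (mem_Icc.mp hn).2 o (Nat.lt_succ_iff.mp (mem_range.mp ho)) t ht

theorem escape_flux_nonneg (hP : IsCMESolution N0 C κd κe κa P) (hκd : 0 ≤ κd) (hκe : 0 ≤ κe)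
    (hκa_cont : Continuous κa) (hκa : ∀ t, 0 ≤ κa t) (hinit1 : P N0 0 0 = 1)
    (hinit0 : ∀ n o : ℕ, ¬(n = N0 ∧ o = 0) → P n o 0 = 0) {n0 : ℕ} (hn0 : n0 ≤ N0)
    {t : ℝ} (ht : 0 ≤ t) :
    0 ≤ ∑ o ∈ range (C + 1), κe * ((n0 : ℝ) - o) * P n0 o t := by
  refine sum_nonneg fun o ho => ?_
  have hoC : o ≤ C := Nat.lt_succ_iff.mp (mem_range.mp ho)
  rcases lt_or_ge n0 o with hlt | hle
  · simp [hP.eq_zero_of_lt hκd hκe hκa_cont hκa hinit0 hn0 hoC hlt ht]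
  · exact mul_nonneg (mul_nonneg hκe (sub_nonneg.mpr (Nat.cast_le.mpr hle)))
      (hP.nonneg hκd hκe hκa_cont hκa hinit1 hinit0 hn0 hoC ht)

end IsCMESolution

theorem cme_margN_upper_tail_antitone_general
    (N0 C : ℕ) (κd κe : ℝ) (κa : ℝ → ℝ)
    (hκd : 0 ≤ κd) (hκe : 0 ≤ κe)
    (hκa_cont : Continuous κa) (hκa : ∀ t : ℝ, 0 ≤ κa t)
    (P : ℕ → ℕ → ℝ → ℝ) (hP : IsCMESolution N0 C κd κe κa P)
    (hinit1 : P N0 0 0 = 1)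
    (hinit0 : ∀ n o : ℕ, ¬(n = N0 ∧ o = 0) → P n o 0 = 0) :
    ∀ n0 : ℕ, n0 ≤ N0 → ∀ t t' : ℝ, 0 ≤ t → t ≤ t' →
      ∑ n ∈ Finset.Icc n0 N0, margN C P n t' ≤ ∑ n ∈ Finset.Icc n0 N0, margN C P n t := by
  intro n0 hn0 t t' ht htt'
  have hderiv (s : ℝ) (hs : s ∈ Set.Ici 0) := hP.hasDerivAt_upper_tail hn0 hs
  refine antitoneOn_of_hasDerivWithinAt_nonpos (convex_Ici 0)
    (fun s hs => (hderiv s hs).continuousAt.continuousWithinAt)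
    (fun s hs => (hderiv s (interior_subset hs)).hasDerivWithinAt)
    (fun s hs => neg_nonpos.mpr ?_) ht (ht.trans htt') htt'
  exact hP.escape_flux_nonneg hκd hκe hκa_cont hκa hinit1 hinit0 hn0 (interior_subset hs)

/-- For the solution of the synaptic CME started from `(N0, 0)`, the
upper tail of the marginal `P_N` is nonincreasing in time. -/
theorem cme_margN_upper_tail_antitone
    (N0 C : ℕ) (κd κe : ℝ) (κa : ℝ → ℝ)
    (hN0 : 1 ≤ N0) (hC : 1 ≤ C) (hκd : 0 ≤ κd) (hκe : 0 ≤ κe)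
    (hκa_cont : Continuous κa) (hκa : ∀ t : ℝ, 0 ≤ κa t)
    (P : ℕ → ℕ → ℝ → ℝ) (hP : IsCMESolution N0 C κd κe κa P)
    (hinit1 : P N0 0 0 = 1)
    (hinit0 : ∀ n o : ℕ, ¬(n = N0 ∧ o = 0) → P n o 0 = 0) :
    ∀ n0 : ℕ, n0 ≤ N0 → ∀ t t' : ℝ, 0 ≤ t → t ≤ t' →
      ∑ n ∈ Finset.Icc n0 N0, margN C P n t' ≤ ∑ n ∈ Finset.Icc n0 N0, margN C P n t :=
  cme_margN_upper_tail_antitone_general N0 C κd κe κa hκd hκe hκa_cont hκa P hP hinit1 hinit0
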